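/- arXiv:2203.03243 — 7 statements merged into one kernel-verified Lean document; each statement's English description precedes it below -/
import Mathlib

section
/- Suppose a choice process admits an AAT representation (u, Γ), and after history h the DM would choose x from A and y from B, where x ≠ y and {x,y} ⊆ A ∩ B. Then either the choice after history (h, A) from B and the choice after history (h, B) from A both equal x (in which case u(x) > u(y)), or both equal y (in which case u(y) > u(x)). -/
open Finset

variable {X : Type*}

/-- A history is valid if every choice set in it is nonempty. -/
def ValidHist (h : List (Finset X)) : Prop := ∀ A ∈ h, A.Nonempty

/-- The set of alternatives chosen at some point along history `h`,
where the choice at stage `i` is made from `h.get i` given the prior history `h.take i`. -/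
def chosenSet (ct : List (Finset X) → Finset X → X) (h : List (Finset X)) : Set X :=
  {x | ∃ i : Fin h.length, ct (h.take i.1) (h.get i) = x}

/-- Effective consideration set after history `h` facing choice set `A`. -/
def consider (ct : List (Finset X) → Finset X → X) (Γ : Finset X → Set X)
    (h : List (Finset X)) (A : Finset X) : Set X :=
  Γ A ∪ (chosenSet ct h ∩ ↑A)

/-- `(u, Γ)` is an AAT representation of the choice process `ct`:
`Γ A` is a nonempty subset of `A`, and the choice after any valid history `h` from any
nonempty `A` is the unique `u`-maximizer of `Γ A ∪ (chosenSet h ∩ A)`. -/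
def IsAAT (ct : List (Finset X) → Finset X → X) (u : X → ℝ) (Γ : Finset X → Set X) : Prop :=
  (∀ A : Finset X, A.Nonempty → (Γ A).Nonempty ∧ Γ A ⊆ ↑A) ∧
  ∀ h : List (Finset X), ValidHist h → ∀ A : Finset X, A.Nonempty →
    ct h A ∈ consider ct Γ h A ∧
      ∀ z ∈ consider ct Γ h A, z ≠ ct h A → u z < u (ct h A)

/-- The set of ever-chosen alternatives. -/
def everChosen (ct : List (Finset X) → Finset X → X) : Set X :=
  {x | ∃ (h : List (Finset X)) (A : Finset X), ValidHist h ∧ A.Nonempty ∧ ct h A = x}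

/-- The history consisting of the first `n` choice sets of an infinite sequence. -/
def prefHist (seq : ℕ → Finset X) (n : ℕ) : List (Finset X) := (List.range n).map seq

/-- The choice made at stage `n` of the infinite sequence `seq`. -/
def choiceAt (ct : List (Finset X) → Finset X → X) (seq : ℕ → Finset X) (n : ℕ) : X :=
  ct (prefHist seq n) (seq n)

/-- The switch relation `x 𝕊 y`: in some sequence of nonempty choice sets, `y` is chosen at
some stage and `x` is chosen at a strictly later stage from a set containing `y`. -/
def Switch (ct : List (Finset X) → Finset X → X) (x y : X) : Prop :=
  x ≠ y ∧ ∃ seq : ℕ → Finset X, (∀ n, (seq n).Nonempty) ∧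
    ∃ i j : ℕ, i < j ∧ choiceAt ct seq i = y ∧ y ∈ seq j ∧ choiceAt ct seq j = x

/-! Appending `A` to the history adds exactly `x = c̃(h)(A)` to the consideration set for `B`,
so the new choice from `B` is whichever of `x` and the old choice `y` has higher utility;
symmetrically, the new choice from `A` is the better of `x` and `y`. Hence both equal
the `u`-better of the two. -/

def IsUniqueMaxOn {β : Type*} [Preorder β] (u : X → β) (S : Set X) (c : X) : Prop :=
  c ∈ S ∧ ∀ z ∈ S, z ≠ c → u z < u c

lemma IsUniqueMaxOn.insert {β : Type*} [Preorder β] {u : X → β} {S : Set X} {c d x : X}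
    (hc : IsUniqueMaxOn u S c) (hd : IsUniqueMaxOn u (insert x S) d) (hxc : x ≠ c) :
    (d = x ∧ u c < u x) ∨ (d = c ∧ u x < u c) := by
  obtain ⟨hdS, hdmax⟩ := hd
  have hcmax : d ≠ c → u c < u d := hdmax c (Set.mem_insert_of_mem _ hc.1) ∘ Ne.symm
  rcases Set.mem_insert_iff.mp hdS with rfl | hdS
  · exact Or.inl ⟨rfl, hcmax hxc⟩
  · by_cases hdc : d = c
    · subst hdc
      exact Or.inr ⟨rfl, hdmax x (Set.mem_insert _ _) hxc⟩
    · exact absurd (hc.2 d hdS hdc) (hcmax hdc).asymm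

lemma chosenSet_append_singleton (ct : List (Finset X) → Finset X → X) (h : List (Finset X))
    (A : Finset X) : chosenSet ct (h ++ [A]) = insert (ct h A) (chosenSet ct h) := by
  ext z
  simp only [chosenSet, Set.mem_ofPred_eq, Set.mem_insert_iff, Fin.exists_iff,
    List.get_eq_getElem, List.length_append, List.length_singleton, Nat.lt_succ_iff_lt_or_eq]
  constructor
  · rintro ⟨i, hi | rfl, rfl⟩
    · exact Or.inr ⟨i, hi, by
        rw [List.take_append_of_le_length hi.le, List.getElem_append_left hi]⟩
    · exact Or.inl (by simp)
  · rintro (rfl | ⟨i, hi, rfl⟩)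
    · exact ⟨h.length, Or.inr rfl, by simp⟩
    · exact ⟨i, Or.inl hi, by
        rw [List.take_append_of_le_length hi.le, List.getElem_append_left hi]⟩

lemma consider_append_singleton (ct : List (Finset X) → Finset X → X) (Γ : Finset X → Set X)
    (h : List (Finset X)) {A B : Finset X} (hAB : ct h A ∈ B) :
    consider ct Γ (h ++ [A]) B = insert (ct h A) (consider ct Γ h B) := by
  ext z
  simp only [consider, chosenSet_append_singleton, Set.mem_union, Set.mem_inter_iff,
    Set.mem_insert_iff, Finset.mem_coe]
  constructor
  · rintro (hz | ⟨rfl | hz, hzB⟩) <;> tauto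
  · rintro (rfl | hz | hz) <;> tauto

lemma ValidHist.append_singleton {h : List (Finset X)} {A : Finset X} (hh : ValidHist h)
    (hA : A.Nonempty) : ValidHist (h ++ [A]) := by
  intro S hS
  rcases List.mem_append.mp hS with hS | hS
  · exact hh S hS
  · rwa [List.mem_singleton.mp hS]

section AAT

variable {ct : List (Finset X) → Finset X → X} {u : X → ℝ} {Γ : Finset X → Set X}

lemma IsAAT.isUniqueMaxOn (hAAT : IsAAT ct u Γ) {h : List (Finset X)} (hh : ValidHist h)
    {A : Finset X} (hA : A.Nonempty) : IsUniqueMaxOn u (consider ct Γ h A) (ct h A) :=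
  hAAT.2 h hh A hA

lemma IsAAT.isUniqueMaxOn_append (hAAT : IsAAT ct u Γ) {h : List (Finset X)} (hh : ValidHist h)
    {A B : Finset X} (hA : A.Nonempty) (hB : B.Nonempty) (hAB : ct h A ∈ B) :
    IsUniqueMaxOn u (insert (ct h A) (consider ct Γ h B)) (ct (h ++ [A]) B) :=
  consider_append_singleton ct Γ h hAB ▸ hAAT.isUniqueMaxOn (hh.append_singleton hA) hB

end AAT

theorem stmt2_general (ct : List (Finset X) → Finset X → X) (u : X → ℝ) (Γ : Finset X → Set X)
    (hAAT : IsAAT ct u Γ) (h : List (Finset X)) (hh : ValidHist h)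
    (A B : Finset X) (hA : A.Nonempty) (hB : B.Nonempty) (x y : X)
    (hx : ct h A = x) (hy : ct h B = y) (hxy : x ≠ y)
    (hxB : x ∈ B) (hyA : y ∈ A) :
    (ct (h ++ [A]) B = x ∧ ct (h ++ [B]) A = x ∧ u x > u y) ∨
    (ct (h ++ [A]) B = y ∧ ct (h ++ [B]) A = y ∧ u y > u x) := by
  subst hx hy
  have hB' := (hAAT.isUniqueMaxOn hh hB).insert (hAAT.isUniqueMaxOn_append hh hA hB hxB) hxy
  have hA' := (hAAT.isUniqueMaxOn hh hA).insert (hAAT.isUniqueMaxOn_append hh hB hA hyA)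
    hxy.symm
  rcases hB' with ⟨hBx, hlt⟩ | ⟨hBy, hlt⟩
  · exact Or.inl ⟨hBx, (hA'.resolve_left fun hAy => hlt.asymm hAy.2).1, hlt⟩
  · exact Or.inr ⟨hBy, (hA'.resolve_right fun hAx => hlt.asymm hAx.2).1, hlt⟩

/-- Convergence: if after history `h` the DM would choose `x` from `A` and `y` from `B`,
with `x ≠ y` and both in `A ∩ B`, then the second-period choices from the alternating
orders coincide, converging on the preferred alternative. -/
theorem stmt2 (ct : List (Finset X) → Finset X → X) (u : X → ℝ) (Γ : Finset X → Set X)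
    (hAAT : IsAAT ct u Γ) (h : List (Finset X)) (hh : ValidHist h)
    (A B : Finset X) (hA : A.Nonempty) (hB : B.Nonempty) (x y : X)
    (hx : ct h A = x) (hy : ct h B = y) (hxy : x ≠ y)
    (hxA : x ∈ A) (hxB : x ∈ B) (hyA : y ∈ A) (hyB : y ∈ B) :
    (ct (h ++ [A]) B = x ∧ ct (h ++ [B]) A = x ∧ u x > u y) ∨
    (ct (h ++ [A]) B = y ∧ ct (h ++ [B]) A = y ∧ u y > u x) :=
  stmt2_general ct u Γ hAAT h hh A B hA hB x y hx hy hxy hxB hyA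
end

section
/- If a choice process admits two AAT representations (u₁, Γ₁) and (u₂, Γ₂), and x, y are both ever-chosen alternatives (each is the first-period default choice of some choice set, or chosen after some history), then u₁(x) > u₁(y) if and only if u₂(x) > u₂(y). That is, the preference over ever-chosen alternatives is uniquely identified. -/
open Finset

variable {X : Type*}

lemma mem_chosenSet_concat (ct : List (Finset X) → Finset X → X)
    (h : List (Finset X)) (A : Finset X) :
    ct h A ∈ chosenSet ct (h ++ [A]) := by
  refine ⟨⟨h.length, by simp⟩, ?_⟩
  simp [List.take_left', List.getElem_append_right]

lemma chosenSet_nil (ct : List (Finset X) → Finset X → X) :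
    chosenSet ct ([] : List (Finset X)) = ∅ := by
  ext z; simp [chosenSet]

lemma validHist_concat {h : List (Finset X)} {A : Finset X}
    (hv : ValidHist h) (hA : A.Nonempty) : ValidHist (h ++ [A]) := by
  intro B hB
  rcases List.mem_append.1 hB with h' | h'
  · exact hv B h'
  · simp at h'; subst h'; exact hA

/-- Uniqueness of preference over ever-chosen alternatives across AAT representations. -/
theorem stmt3 (ct : List (Finset X) → Finset X → X) (u₁ u₂ : X → ℝ)
    (Γ₁ Γ₂ : Finset X → Set X)
    (hAAT1 : IsAAT ct u₁ Γ₁) (hAAT2 : IsAAT ct u₂ Γ₂)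
    (x y : X) (hx : x ∈ everChosen ct) (hy : y ∈ everChosen ct) :
    u₁ x > u₁ y ↔ u₂ x > u₂ y := by
  classical
  rcases eq_or_ne x y with rfl | hxy
  · simp
  obtain ⟨h₂, A₂, hv₂, hA₂, hcx⟩ := hx
  obtain ⟨h₁, A₁, hv₁, hA₁, hcy⟩ := hy
  set B : Finset X := {x, y} with hB
  have hBne : B.Nonempty := ⟨x, by simp [hB]⟩
  have hxB : x ∈ B := by simp [hB]
  have hyB : y ∈ B := by simp [hB]
  have hv₁' : ValidHist (h₁ ++ [A₁]) := validHist_concat hv₁ hA₁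
  have hv₂' : ValidHist (h₂ ++ [A₂]) := validHist_concat hv₂ hA₂
  have hy1 : y ∈ chosenSet ct (h₁ ++ [A₁]) := hcy ▸ mem_chosenSet_concat ct h₁ A₁
  have hx2 : x ∈ chosenSet ct (h₂ ++ [A₂]) := hcx ▸ mem_chosenSet_concat ct h₂ A₂
  have hvnil : ValidHist ([] : List (Finset X)) := by intro A hA; simp at hA
  -- membership of the choices in B
  have memB : ∀ (Γ : Finset X → Set X) (u : X → ℝ), IsAAT ct u Γ →
      ∀ h : List (Finset X), ValidHist h → ct h B ∈ B := by
    intro Γ u hAAT h hv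
    rcases (hAAT.2 h hv B hBne).1 with hmem | hmem
    · exact (hAAT.1 B hBne).2 hmem
    · exact hmem.2
  have hcB : ct (h₁ ++ [A₁]) B ∈ B := memB Γ₁ u₁ hAAT1 _ hv₁'
  have hcB' : ct (h₂ ++ [A₂]) B ∈ B := memB Γ₁ u₁ hAAT1 _ hv₂'
  -- the empty-history choice lies in both Γ₁ B and Γ₂ B
  have hd : ∀ (Γ : Finset X → Set X) (u : X → ℝ), IsAAT ct u Γ → ct [] B ∈ Γ B := by
    intro Γ u hAAT
    rcases (hAAT.2 [] hvnil B hBne).1 with hmem | hmem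
    · exact hmem
    · rw [chosenSet_nil] at hmem; exact absurd hmem.1 (Set.notMem_empty _)
  have hdB : ct ([] : List (Finset X)) B ∈ B := memB Γ₁ u₁ hAAT1 [] hvnil
  -- key: from a scenario where z is in the consideration set and the choice is w ≠ z,
  -- conclude u z < u w for each representation
  have key : ∀ (Γ : Finset X → Set X) (u : X → ℝ), IsAAT ct u Γ →
      ∀ h : List (Finset X), ValidHist h → ∀ z, z ∈ consider ct Γ h B →
      z ≠ ct h B → u z < u (ct h B) := by
    intro Γ u hAAT h hv z hz hne
    exact (hAAT.2 h hv B hBne).2 z hz hne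
  suffices hmain : (u₁ y < u₁ x ∧ u₂ y < u₂ x) ∨ (u₁ x < u₁ y ∧ u₂ x < u₂ y) by
    rcases hmain with ⟨p, q⟩ | ⟨p, q⟩ <;> constructor <;> intro hlt <;>
      first | assumption | linarith
  rcases Finset.mem_insert.1 hcB with hc | hc
  · -- after the y-history, x is chosen from B: x beats y in both
    left
    constructor
    · have := key Γ₁ u₁ hAAT1 _ hv₁' y (Or.inr ⟨hy1, hyB⟩) (by rw [hc]; exact fun h => hxy h.symm)
      rwa [hc] at this
    · have := key Γ₂ u₂ hAAT2 _ hv₁' y (Or.inr ⟨hy1, hyB⟩) (by rw [hc]; exact fun h => hxy h.symm)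
      rwa [hc] at this
  · rw [Finset.mem_singleton] at hc
    rcases Finset.mem_insert.1 hcB' with hc' | hc'
    · -- after both histories the "own" element is chosen; use the empty-history choice
      rcases Finset.mem_insert.1 hdB with hd' | hd'
      · -- d = x ∈ Γᵢ B, and after the y-history y is chosen: y beats x in both
        right
        constructor
        · have := key Γ₁ u₁ hAAT1 _ hv₁' x (Or.inl (hd' ▸ hd Γ₁ u₁ hAAT1)) (by rw [hc]; exact hxy)
          rwa [hc] at this
        · have := key Γ₂ u₂ hAAT2 _ hv₁' x (Or.inl (hd' ▸ hd Γ₂ u₂ hAAT2)) (by rw [hc]; exact hxy)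
          rwa [hc] at this
      · -- d = y ∈ Γᵢ B, and after the x-history x is chosen: x beats y in both
        rw [Finset.mem_singleton] at hd'
        left
        constructor
        · have := key Γ₁ u₁ hAAT1 _ hv₂' y (Or.inl (hd' ▸ hd Γ₁ u₁ hAAT1)) (by rw [hc']; exact fun h => hxy h.symm)
          rwa [hc'] at this
        · have := key Γ₂ u₂ hAAT2 _ hv₂' y (Or.inl (hd' ▸ hd Γ₂ u₂ hAAT2)) (by rw [hc']; exact fun h => hxy h.symm)
          rwa [hc'] at this
    · -- after the x-history, y is chosen from B: y beats x in both
      rw [Finset.mem_singleton] at hc'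
      right
      constructor
      · have := key Γ₁ u₁ hAAT1 _ hv₂' x (Or.inr ⟨hx2, hxB⟩) (by rw [hc']; exact hxy)
        rwa [hc'] at this
      · have := key Γ₂ u₂ hAAT2 _ hv₂' x (Or.inr ⟨hx2, hxB⟩) (by rw [hc']; exact hxy)
        rwa [hc'] at this
end

section
/- Suppose a choice process admits an AAT representation. Then the switch relation 𝕊 restricted to the ever-chosen alternatives X̂ is a strict total order: asymmetric, transitive, and connected (for any distinct x, y ∈ X̂, either x 𝕊 y or y 𝕊 x). -/
open Finset

variable {X : Type*}

section AuxAAT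

variable {X : Type*}

lemma prefHist_length (seq : ℕ → Finset X) (n : ℕ) : (prefHist seq n).length = n := by
  simp [prefHist]

lemma prefHist_getElem (seq : ℕ → Finset X) (n i : ℕ) (hi : i < (prefHist seq n).length) :
    (prefHist seq n)[i] = seq i := by
  simp only [prefHist, List.length_map, List.length_range] at hi
  simp [prefHist, hi]

lemma prefHist_take (seq : ℕ → Finset X) {k n : ℕ} (h : k ≤ n) :
    (prefHist seq n).take k = prefHist seq k := by
  simp only [prefHist, ← List.map_take, List.take_range]
  rw [Nat.min_eq_left h]

lemma validHist_prefHist {seq : ℕ → Finset X} (hseq : ∀ n, (seq n).Nonempty) (n : ℕ) :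
    ValidHist (prefHist seq n) := by
  intro A hA
  simp only [prefHist, List.mem_map] at hA
  obtain ⟨m, -, rfl⟩ := hA
  exact hseq m

/-- The switch relation implies a strict utility gap. -/
lemma switch_u_lt {ct : List (Finset X) → Finset X → X} {u : X → ℝ} {Γ : Finset X → Set X}
    (hAAT : IsAAT ct u Γ) {x y : X} (h : Switch ct x y) : u y < u x := by
  obtain ⟨hne, seq, hseq, i, j, hij, hiy, hyj, hjx⟩ := h
  have hv : ValidHist (prefHist seq j) := validHist_prefHist hseq j
  have hy_chosen : y ∈ chosenSet ct (prefHist seq j) := by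
    refine ⟨⟨i, by simpa [prefHist_length] using hij⟩, ?_⟩
    rw [show ((prefHist seq j).take i) = prefHist seq i from prefHist_take _ hij.le]
    simp only [List.get_eq_getElem, prefHist_getElem]
    exact hiy
  have hmem : y ∈ consider ct Γ (prefHist seq j) (seq j) :=
    Or.inr ⟨hy_chosen, by exact_mod_cast hyj⟩
  have := (hAAT.2 (prefHist seq j) hv (seq j) (hseq j)).2 y hmem
  rw [show ct (prefHist seq j) (seq j) = x from hjx] at this
  exact this hne.symm

/-- The auxiliary sequence of choice sets: the history `h`, then `A`, then `B`,
then `C` forever. -/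
def connSeq (h : List (Finset X)) (A B C : Finset X) : ℕ → Finset X :=
  fun n => (h ++ [A, B]).getD n C

lemma connSeq_nonempty {h : List (Finset X)} {A B C : Finset X}
    (hv : ValidHist h) (hA : A.Nonempty) (hB : B.Nonempty) (hC : C.Nonempty) :
    ∀ n, (connSeq h A B C n).Nonempty := by
  intro n
  unfold connSeq
  by_cases hn : n < (h ++ [A, B]).length
  · rw [List.getD_eq_getElem _ _ hn]
    have hm : (h ++ [A, B])[n] ∈ h ++ [A, B] := List.getElem_mem hn
    rcases List.mem_append.1 hm with h1 | h2
    · exact hv _ h1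
    · rcases List.mem_cons.1 h2 with he | h3
      · rw [he]; exact hA
      · rw [List.mem_singleton.1 h3]; exact hB
  · rw [List.getD_eq_default _ _ (by omega)]
    exact hC

lemma connSeq_pref {h : List (Finset X)} {A B C : Finset X} {m : ℕ}
    (hm : m ≤ (h ++ [A, B]).length) :
    prefHist (connSeq h A B C) m = (h ++ [A, B]).take m := by
  apply List.ext_getElem
  · rw [prefHist_length, List.length_take]
    omega
  · intro i h1 h2
    rw [prefHist_getElem, List.getElem_take]
    have hi : i < (h ++ [A, B]).length := by
      rw [List.length_take] at h2
      omega
    exact List.getD_eq_getElem _ _ hi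

/-- Connectedness: if `x` is ever chosen and `y ≠ x`, then `x 𝕊 y` or `y 𝕊 x`. -/
lemma switch_connect {ct : List (Finset X) → Finset X → X} {u : X → ℝ} {Γ : Finset X → Set X}
    (hAAT : IsAAT ct u Γ) {x y : X} (hx : x ∈ everChosen ct) (hxy : x ≠ y) :
    Switch ct x y ∨ Switch ct y x := by
  classical
  obtain ⟨h, A, hv, hA, hctx⟩ := hx
  have hyne : ({y} : Finset X).Nonempty := Finset.singleton_nonempty y
  have hxyne : ({x, y} : Finset X).Nonempty := Finset.insert_nonempty x {y}
  set seq : ℕ → Finset X := connSeq h A {y} {x, y} with hseqdef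
  have hseq : ∀ n, (seq n).Nonempty := connSeq_nonempty hv hA hyne hxyne
  have hlen : (h ++ [A, ({y} : Finset X)]).length = h.length + 2 := by simp
  -- prefix histories
  have hprefN : prefHist seq h.length = h := by
    rw [hseqdef, connSeq_pref (by omega), List.take_left]
  have hprefN1 : prefHist seq (h.length + 1) = h ++ [A] := by
    rw [hseqdef, connSeq_pref (by omega),
      show h ++ [A, ({y} : Finset X)] = (h ++ [A]) ++ [({y} : Finset X)] by simp,
      show h.length + 1 = (h ++ [A]).length by simp, List.take_left]
  have hprefN2 : prefHist seq (h.length + 2) = h ++ [A, ({y} : Finset X)] := by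
    rw [hseqdef, connSeq_pref (by omega), ← hlen, List.take_length]
  -- the sets at each stage
  have hseqN : seq h.length = A := by
    rw [hseqdef]
    unfold connSeq
    rw [List.getD_append_right _ _ _ _ (le_refl _)]
    simp
  have hseqN1 : seq (h.length + 1) = {y} := by
    rw [hseqdef]
    unfold connSeq
    rw [List.getD_append_right _ _ _ _ (by omega)]
    simp
  have hseqN2 : seq (h.length + 2) = {x, y} := by
    rw [hseqdef]
    unfold connSeq
    rw [List.getD_eq_default _ _ (by simp)]
  -- choice at stage h.length is x
  have hcN : choiceAt ct seq h.length = x := by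
    rw [choiceAt, hprefN, hseqN, hctx]
  -- valid histories
  have hvN1 : ValidHist (h ++ [A]) := by
    intro B hB
    rcases List.mem_append.1 hB with h1 | h2
    · exact hv _ h1
    · rw [List.mem_singleton.1 h2]; exact hA
  have hvN2 : ValidHist (h ++ [A, ({y} : Finset X)]) := by
    intro B hB
    rcases List.mem_append.1 hB with h1 | h2
    · exact hv _ h1
    · rcases List.mem_cons.1 h2 with he | h3
      · rw [he]; exact hA
      · rw [List.mem_singleton.1 h3]; exact hyne
  -- choice at stage h.length + 1 is y
  have hcN1 : choiceAt ct seq (h.length + 1) = y := by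
    rw [choiceAt, hprefN1, hseqN1]
    have hmem := (hAAT.2 (h ++ [A]) hvN1 {y} hyne).1
    have hsub : consider ct Γ (h ++ [A]) {y} ⊆ ↑({y} : Finset X) := by
      intro z hz
      rcases hz with hz | hz
      · exact (hAAT.1 {y} hyne).2 hz
      · exact hz.2
    simpa using hsub hmem
  -- choice at stage h.length + 2 is x or y
  have hwmem := (hAAT.2 (h ++ [A, ({y} : Finset X)]) hvN2 {x, y} hxyne).1
  have hwxy : ct (h ++ [A, ({y} : Finset X)]) {x, y} = x ∨
      ct (h ++ [A, ({y} : Finset X)]) {x, y} = y := by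
    have : ct (h ++ [A, ({y} : Finset X)]) {x, y} ∈ ↑({x, y} : Finset X) := by
      rcases hwmem with hm | hm
      · exact (hAAT.1 {x, y} hxyne).2 hm
      · exact hm.2
    simpa using this
  have hcN2 : choiceAt ct seq (h.length + 2) = ct (h ++ [A, ({y} : Finset X)]) {x, y} := by
    rw [choiceAt, hprefN2, hseqN2]
  rcases hwxy with hw | hw
  · left
    refine ⟨hxy, seq, hseq, h.length + 1, h.length + 2, by omega, hcN1, ?_, by rw [hcN2, hw]⟩
    rw [hseqN2]; simp
  · right
    refine ⟨hxy.symm, seq, hseq, h.length, h.length + 2, by omega, hcN, ?_, by rw [hcN2, hw]⟩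
    rw [hseqN2]; simp

end AuxAAT

/-- The switch relation 𝕊 restricted to the ever-chosen alternatives is a strict total
order: asymmetric, transitive, and connected. -/
theorem stmt4 (ct : List (Finset X) → Finset X → X) (u : X → ℝ) (Γ : Finset X → Set X)
    (hAAT : IsAAT ct u Γ) :
    (∀ x ∈ everChosen ct, ∀ y ∈ everChosen ct, Switch ct x y → ¬ Switch ct y x) ∧
    (∀ x ∈ everChosen ct, ∀ y ∈ everChosen ct, ∀ z ∈ everChosen ct,
      Switch ct x y → Switch ct y z → Switch ct x z) ∧
    (∀ x ∈ everChosen ct, ∀ y ∈ everChosen ct, x ≠ y → Switch ct x y ∨ Switch ct y x) := by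
  refine ⟨?_, ?_, ?_⟩
  · intro x _ y _ h1 h2
    have l1 := switch_u_lt hAAT h1
    have l2 := switch_u_lt hAAT h2
    linarith
  · intro x hx y _ z _ h1 h2
    have l1 := switch_u_lt hAAT h1
    have l2 := switch_u_lt hAAT h2
    have hxz : x ≠ z := by
      rintro rfl
      linarith
    rcases switch_connect hAAT hx hxz with hs | hs
    · exact hs
    · have := switch_u_lt hAAT hs
      linarith
  · intro x hx y _ hxy
    exact switch_connect hAAT hx hxy
end

section
/- Let c admit an AAT representation (Γ, u), and let Γ* be another attention function with Γ*(A) ⊆ Γ(A) and c₀(A) ∈ Γ*(A) for all A, where c₀(A) is the no-history choice from A. Then (Γ*, u) is also an AAT representation of the same choice process: the induced choices after every history coincide. -/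
open Finset

variable {X : Type*}

/-- Shrinking the attention function while keeping the no-history default choice in
consideration preserves the AAT representation. -/
theorem stmt6 (ct : List (Finset X) → Finset X → X) (u : X → ℝ)
    (Γ Γstar : Finset X → Set X) (hAAT : IsAAT ct u Γ)
    (hsub : ∀ A : Finset X, A.Nonempty → Γstar A ⊆ Γ A)
    (hdef : ∀ A : Finset X, A.Nonempty → ct [] A ∈ Γstar A) :
    IsAAT ct u Γstar := by
  obtain ⟨hΓ, hmax⟩ := hAAT
  have hempty : chosenSet ct ([] : List (Finset X)) = ∅ := by
    ext x; simp [chosenSet]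
  constructor
  · intro A hA
    exact ⟨⟨ct [] A, hdef A hA⟩, fun x hx => (hΓ A hA).2 (hsub A hA hx)⟩
  · intro h hh A hA
    have hsubset : consider ct Γstar h A ⊆ consider ct Γ h A := by
      intro z hz
      rcases hz with hz | hz
      · exact Or.inl (hsub A hA hz)
      · exact Or.inr hz
    obtain ⟨hmem, huniq⟩ := hmax h hh A hA
    have h0 := hmax [] (by intro B hB; simp at hB) A hA
    have h0mem : ct [] A ∈ Γ A := by
      rcases h0.1 with hm | hm
      · exact hm
      · rw [hempty] at hm; simp at hm
    have key : ct h A ∈ consider ct Γstar h A := by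
      rcases hmem with hm | hm
      · -- ct h A ∈ Γ A; show it equals ct [] A
        by_cases heq : ct h A = ct [] A
        · exact Or.inl (heq ▸ hdef A hA)
        · exfalso
          have h1 : u (ct h A) < u (ct [] A) := by
            apply h0.2
            · exact Or.inl hm
            · exact heq
          have h2 : u (ct [] A) < u (ct h A) := by
            apply huniq
            · exact Or.inl h0mem
            · exact fun he => heq he.symm
          linarith
      · exact Or.inr hm
    exact ⟨key, fun z hz hne => huniq z (hsubset hz) hne⟩
end

section
/- If a choice process admits AAT representations (Γ, u) and (Γ', u) with the same utility u, then it also admits the AAT representation (Γ ∩ Γ', u), where (Γ ∩ Γ')(A) = Γ(A) ∩ Γ'(A). -/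
open Finset

variable {X : Type*}

/-- If `(Γ, u)` and `(Γ', u)` are AAT representations of `ct`, so is `(Γ ∩ Γ', u)`. -/
theorem stmt7 (ct : List (Finset X) → Finset X → X) (u : X → ℝ)
    (Γ Γ' : Finset X → Set X) (h1 : IsAAT ct u Γ) (h2 : IsAAT ct u Γ') :
    IsAAT ct u (fun A => Γ A ∩ Γ' A) := by
  have hempty : chosenSet ct ([] : List (Finset X)) = ∅ := by
    ext x
    simp [chosenSet]
  -- ct [] A lies in Γ A ∩ Γ' A
  have hkey : ∀ A : Finset X, A.Nonempty → ct [] A ∈ Γ A ∩ Γ' A := by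
    intro A hA
    have hv : ValidHist ([] : List (Finset X)) := by intro B hB; simp at hB
    have e1 := (h1.2 [] hv A hA).1
    have e2 := (h2.2 [] hv A hA).1
    simp only [consider, hempty, Set.empty_inter, Set.union_empty] at e1 e2
    exact ⟨e1, e2⟩
  constructor
  · intro A hA
    refine ⟨⟨ct [] A, hkey A hA⟩, ?_⟩
    exact fun x hx => (h1.1 A hA).2 hx.1
  · intro h hv A hA
    have H1 := h1.2 h hv A hA
    have H2 := h2.2 h hv A hA
    constructor
    · rcases H1.1 with hg | hc
      · rcases H2.1 with hg' | hc
        · exact Or.inl ⟨hg, hg'⟩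
        · exact Or.inr hc
      · exact Or.inr hc
    · intro z hz hne
      apply H1.2 z _ hne
      rcases hz with hg | hc
      · exact Or.inl hg.1
      · exact Or.inr hc
end

section
/- Suppose c admits an AAT representation (u, Γ). If c satisfies Past Independence (for every history (A₁,…,A_K) and choice set B, the choice after (A₁,…,A_K) from B equals the choice after (A₁,…,A_{K−1}) from B), then c admits a standard utility representation: there exists v : X → ℝ such that for every history h and set A, the choice after h from A is the unique v-maximizer of A. -/
open Finset

variable {X : Type*}

/-- Past Independence: the most recent experience never affects the next choice. -/
def PastIndep (ct : List (Finset X) → Finset X → X) : Prop :=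
  ∀ h : List (Finset X), ValidHist h → ∀ A B : Finset X, A.Nonempty → B.Nonempty →
    ct (h ++ [A]) B = ct h B

/-- Under AAT, Past Independence implies a standard utility representation. -/
theorem stmt12 [Countable X] (ct : List (Finset X) → Finset X → X) (u : X → ℝ)
    (Γ : Finset X → Set X) (hAAT : IsAAT ct u Γ) (hPI : PastIndep ct) :
    ∃ v : X → ℝ, ∀ h : List (Finset X), ValidHist h → ∀ A : Finset X, A.Nonempty →
      ct h A ∈ A ∧ ∀ z ∈ A, z ≠ ct h A → v z < v (ct h A) := by

  obtain ⟨hΓ, hmax⟩ := hAAT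
  -- choices are always in the menu
  have hmem : ∀ h : List (Finset X), ValidHist h → ∀ A : Finset X, A.Nonempty →
      ct h A ∈ A := by
    intro h hv A hA
    have := (hmax h hv A hA).1
    rcases this with h1 | h2
    · exact (hΓ A hA).2 h1
    · exact h2.2
  -- history independence
  have hconst : ∀ h : List (Finset X), ValidHist h → ∀ B : Finset X, B.Nonempty →
      ct h B = ct [] B := by
    intro h
    induction h using List.reverseRecOn with
    | nil => intro _ B _; rfl
    | append_singleton t A ih =>
      intro hv B hB
      have hvt : ValidHist t := fun C hC => hv C (List.mem_append_left _ hC)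
      have hAne : A.Nonempty := hv A (List.mem_append_right _ (List.mem_singleton_self A))
      rw [hPI t hvt A B hAne hB]
      exact ih hvt B hB
  refine ⟨u, ?_⟩
  intro h hv A hA
  refine ⟨hmem h hv A hA, ?_⟩
  intro z hz hne
  have hzv : ValidHist [({z} : Finset X)] := by
    intro C hC
    simp only [List.mem_singleton] at hC
    subst hC
    exact Finset.singleton_nonempty z
  -- the choice from {z} is z
  have hz1 : ct [] ({z} : Finset X) = z := by
    have := hmem [] (by intro C hC; simp at hC) {z} (Finset.singleton_nonempty z)
    simpa using this
  -- z is in the chosen set of history [{z}]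
  have hzc : z ∈ chosenSet ct [({z} : Finset X)] := by
    exact ⟨⟨0, by simp⟩, hz1⟩
  have hzcons : z ∈ consider ct Γ [({z} : Finset X)] A :=
    Or.inr ⟨hzc, hz⟩
  have heq : ct [({z} : Finset X)] A = ct h A := by
    have h1 : ct ([] ++ [({z} : Finset X)]) A = ct [] A :=
      hPI [] (by intro C hC; simp at hC) {z} A (Finset.singleton_nonempty z) hA
    simp only [List.nil_append] at h1
    rw [h1, hconst h hv A hA]
  have hne' : z ≠ ct [({z} : Finset X)] A := by rw [heq]; exact hne
  have := (hmax [({z} : Finset X)] hzv A hA).2 z hzcons hne'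
  rwa [heq] at this
end

section
/- Suppose a choice process satisfies Past Dependence (Axiom 2). Then every alternative chosen after some history is also chosen at some choice set with no history: if x is the choice after history (A₁,…,A_K) from some set, then there exists a choice set B with c₀(B) = x. -/
open Finset

variable {X : Type*}

/-- Weak Stability: within a sequence, once `x` is chosen and afterwards `y ≠ x` is chosen
over `x`, `x` is never chosen again when `y` is available. -/
def WeakStability (ct : List (Finset X) → Finset X → X) : Prop :=
  ∀ seq : ℕ → Finset X, (∀ n, (seq n).Nonempty) →
    ∀ (x y : X) (h i j : ℕ), h < i → i < j →
      choiceAt ct seq h = x → choiceAt ct seq i = y → x ≠ y →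
      x ∈ seq i → y ∈ seq j → choiceAt ct seq j ≠ x

/-- Past Dependence: the next choice is either the choice that would be made absent the
most recent experience, or exactly the most recent choice. -/
def PastDependence (ct : List (Finset X) → Finset X → X) : Prop :=
  ∀ h : List (Finset X), ValidHist h → ∀ A B : Finset X, A.Nonempty → B.Nonempty →
    ct (h ++ [A]) B = ct h B ∨ ct (h ++ [A]) B = ct h A

/-- Revealed preference `x P y`: either a switch from `y` to `x` occurs in some sequence,
or `x` is chosen after some history from a set whose no-history default choice is `y`. -/
def Rev (ct : List (Finset X) → Finset X → X) (x y : X) : Prop :=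
  x ≠ y ∧
    ((∃ seq : ℕ → Finset X, (∀ n, (seq n).Nonempty) ∧
        ∃ i j : ℕ, i < j ∧ choiceAt ct seq i = y ∧ y ∈ seq j ∧ choiceAt ct seq j = x) ∨
      (∃ (h : List (Finset X)) (A : Finset X),
        ValidHist h ∧ A.Nonempty ∧ ct [] A = y ∧ ct h A = x))

/-- Default Attention: if the no-history default choice of `A` is revealed preferred to
`y`, then `y` is never chosen from `A` after any history. -/
def DefaultAttention (ct : List (Finset X) → Finset X → X) : Prop :=
  ∀ A : Finset X, A.Nonempty → ∀ y : X, Rev ct (ct [] A) y →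
    ∀ h : List (Finset X), ValidHist h → ct h A ≠ y

/-- Under Past Dependence, every alternative chosen after some history is the
no-history default choice of some choice set. -/
theorem stmt18 (ct : List (Finset X) → Finset X → X) (h2 : PastDependence ct) :
    ∀ h : List (Finset X), ValidHist h → ∀ A : Finset X, A.Nonempty →
      ∃ B : Finset X, B.Nonempty ∧ ct [] B = ct h A := by
  intro h
  induction h using List.reverseRecOn with
  | nil => intro _ A hA; exact ⟨A, hA, rfl⟩
  | append_singleton l A' ih =>
    intro hv A hA
    have hvl : ValidHist l := fun B hB => hv B (List.mem_append_left _ hB)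
    have hA' : A'.Nonempty := hv A' (by simp)
    rcases h2 l hvl A' A hA' hA with heq | heq
    · rcases ih hvl A hA with ⟨B, hB, hBeq⟩
      exact ⟨B, hB, hBeq.trans heq.symm⟩
    · rcases ih hvl A' hA' with ⟨B, hB, hBeq⟩
      exact ⟨B, hB, hBeq.trans heq.symm⟩
end
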